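/- arXiv:0906.0483 — 9 statements merged into one kernel-verified Lean document; each statement's English description precedes it below -/
import Mathlib

section
/- If X₁ is an invertible 2×2 real matrix, then the hyperdeterminant Δ = ((det(X₁+X₂) − det(X₁−X₂))/2)² − 4·det(X₁)·det(X₂) equals the discriminant of the characteristic polynomial of the matrix det(X₁)·X₂·X₁⁻¹. -/
theorem hyperdeterminant_eq_charpoly_discriminant
    (X₁ X₂ : Matrix (Fin 2) (Fin 2) ℝ) (hX : IsUnit X₁.det) :
    (((X₁ + X₂).det - (X₁ - X₂).det) / 2) ^ 2 - 4 * X₁.det * X₂.det =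
      (X₁.det • (X₂ * X₁⁻¹)).trace ^ 2 - 4 * (X₁.det • (X₂ * X₁⁻¹)).det := by
  have hd : X₁.det ≠ 0 := hX.ne_zero
  simp only [Matrix.inv_def, Matrix.adjugate_fin_two, Ring.inverse_eq_inv']
  simp [Matrix.det_fin_two, Matrix.trace_fin_two, Matrix.mul_apply, Fin.sum_univ_two,
    Matrix.smul_apply, Matrix.add_apply, Matrix.sub_apply]
  have h : (X₁ 0 0 * X₁ 1 1 - X₁ 0 1 * X₁ 1 0) ≠ 0 := by
    simpa [Matrix.det_fin_two] using hd
  field_simp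
  ring
end

section
/- Let a, b, c, d be real numbers and set X₁ = [[a,b],[b,c]], X₂ = [[b,c],[c,d]]. If X₁ is invertible and X₂·X₁⁻¹ has two distinct real eigenvalues λ₁ ≠ λ₂, then the symmetric tensor with slabs X₁, X₂ decomposes as a sum of two symmetric rank-1 terms: there exist u, v ∈ ℝ² with Xᵢⱼₖ = uᵢuⱼuₖ + vᵢvⱼvₖ for all i,j,k ∈ {1,2}, where Xᵢⱼ₁ = (X₁)ᵢⱼ and Xᵢⱼ₂ = (X₂)ᵢⱼ. -/
lemma exists_cube_root (x : ℝ) : ∃ s : ℝ, s ^ 3 = x := by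
  rcases le_or_gt 0 x with h | h
  · refine ⟨x ^ ((1:ℝ)/3), ?_⟩
    rw [← Real.rpow_natCast (x ^ ((1:ℝ)/3)) 3, ← Real.rpow_mul h]
    norm_num
  · refine ⟨-((-x) ^ ((1:ℝ)/3)), ?_⟩
    have h' : (0:ℝ) ≤ -x := by linarith
    rw [neg_pow, ← Real.rpow_natCast ((-x) ^ ((1:ℝ)/3)) 3, ← Real.rpow_mul h']
    norm_num

theorem symmetric_rank_two_of_distinct_real_eigenvalues
    (a b c d l₁ l₂ : ℝ)
    (hX : IsUnit (!![a, b; b, c] : Matrix (Fin 2) (Fin 2) ℝ).det)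
    (hne : l₁ ≠ l₂)
    (h1 : ((!![b, c; c, d] : Matrix (Fin 2) (Fin 2) ℝ) *
        (!![a, b; b, c] : Matrix (Fin 2) (Fin 2) ℝ)⁻¹ - l₁ • 1).det = 0)
    (h2 : ((!![b, c; c, d] : Matrix (Fin 2) (Fin 2) ℝ) *
        (!![a, b; b, c] : Matrix (Fin 2) (Fin 2) ℝ)⁻¹ - l₂ • 1).det = 0) :
    ∃ u v : Fin 2 → ℝ, ∀ i j : Fin 2,
      (!![a, b; b, c] : Matrix (Fin 2) (Fin 2) ℝ) i j =
          u i * u j * u 0 + v i * v j * v 0 ∧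
      (!![b, c; c, d] : Matrix (Fin 2) (Fin 2) ℝ) i j =
          u i * u j * u 1 + v i * v j * v 1 := by
  -- reduce hypotheses to scalar equations
  have key : ∀ l : ℝ, ((!![b, c; c, d] : Matrix (Fin 2) (Fin 2) ℝ) *
      (!![a, b; b, c] : Matrix (Fin 2) (Fin 2) ℝ)⁻¹ - l • 1).det = 0 →
      (b - l*a)*(d - l*c) - (c - l*b)^2 = 0 := by
    intro l hl
    have h2' : (((!![b, c; c, d] : Matrix (Fin 2) (Fin 2) ℝ) *
        (!![a, b; b, c])⁻¹ - l • 1) * !![a, b; b, c]).det = 0 := by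
      rw [Matrix.det_mul, hl, zero_mul]
    rw [Matrix.sub_mul, Matrix.smul_mul, one_mul,
      Matrix.nonsing_inv_mul_cancel_right _ _ hX] at h2'
    simp [Matrix.det_fin_two, Matrix.sub_apply, Matrix.smul_apply] at h2'
    linear_combination h2'
  have e1 := key l₁ h1
  have e2 := key l₂ h2
  have hD : a*c - b*b ≠ 0 := by
    have := hX
    rw [Matrix.det_fin_two_of, isUnit_iff_ne_zero] at this
    simpa using this
  have hne' : l₁ - l₂ ≠ 0 := sub_ne_zero.mpr hne
  -- sum and product of eigenvalues
  have h4 : (l₁ - l₂) * ((a*c - b*b)*(l₁ + l₂) - (a*d - b*c)) = 0 := by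
    linear_combination e1 - e2
  have hsum : (a*c - b*b)*(l₁ + l₂) = a*d - b*c := by
    have := (mul_eq_zero.mp h4).resolve_left hne'
    linarith [this]
  have hprod : (a*c - b*b)*(l₁*l₂) = b*d - c*c := by
    linear_combination l₁ * hsum - e1
  -- scalar relations c, d
  have hc2 : c = b*(l₁ + l₂) - a*(l₁*l₂) := by
    have h5 : (a*c - b*b) * c = (a*c - b*b) * (b*(l₁ + l₂) - a*(l₁*l₂)) := by
      linear_combination a*hprod - b*hsum
    exact mul_left_cancel₀ hD h5
  have hd2 : d = c*(l₁ + l₂) - b*(l₁*l₂) := by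
    have h5 : (a*c - b*b) * d = (a*c - b*b) * (c*(l₁ + l₂) - b*(l₁*l₂)) := by
      linear_combination b*hprod - c*hsum
    exact mul_left_cancel₀ hD h5
  -- solve for weights
  set p : ℝ := (b - a*l₂)/(l₁ - l₂) with hp
  set q : ℝ := (a*l₁ - b)/(l₁ - l₂) with hq
  have ha' : a = p + q := by rw [hp, hq]; field_simp; ring
  have hb' : b = p*l₁ + q*l₂ := by rw [hp, hq]; field_simp; ring
  have hc' : c = p*l₁^2 + q*l₂^2 := by
    linear_combination hc2 + (l₁+l₂)*hb' - (l₁*l₂)*ha'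
  have hd' : d = p*l₁^3 + q*l₂^3 := by
    linear_combination hd2 + (l₁+l₂)*hc' - (l₁*l₂)*hb'
  obtain ⟨s, hs⟩ := exists_cube_root p
  obtain ⟨t, ht⟩ := exists_cube_root q
  refine ⟨![s, s*l₁], ![t, t*l₂], ?_⟩
  intro i j
  fin_cases i <;> fin_cases j <;> constructor <;>
    simp
  · linear_combination ha' - hs - ht
  · linear_combination hb' - l₁*hs - l₂*ht
  · linear_combination hb' - l₁*hs - l₂*ht
  · linear_combination hc' - l₁^2*hs - l₂^2*ht
  · linear_combination hb' - l₁*hs - l₂*ht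
  · linear_combination hc' - l₁^2*hs - l₂^2*ht
  · linear_combination hc' - l₁^2*hs - l₂^2*ht
  · linear_combination hd' - l₁^3*hs - l₂^3*ht
end

section
/- Let a, b, c, d be real with X₁ = [[a,b],[b,c]] invertible. If the matrix X₂·X₁⁻¹ (with X₂ = [[b,c],[c,d]]) has a repeated real eigenvalue and is not diagonalizable, or has non-real complex eigenvalues, then the symmetric tensor X with Xᵢⱼₖ given by a,b,c,d cannot be written as uᵢuⱼuₖ + vᵢvⱼvₖ for any real vectors u, v ∈ ℝ². -/
/-!
If X = u⊗u⊗u + v⊗v⊗v, its slices X₁ = u₀ uuᵀ + v₀ vvᵀ and X₂ = u₁ uuᵀ + v₁ vvᵀ lie in the pencil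
spanned by two rank-one forms. The discriminant of X₂X₁⁻¹ is
(tr(X₂ adj X₁)² - 4 det X₁ det X₂) / (det X₁)², and for such a pencil the numerator (Cayley's
hyperdeterminant of X) equals (u₀v₁ - u₁v₀)⁶, which is nonzero since det X₁ = u₀v₀(u₀v₁ - u₁v₀)².
So X₂X₁⁻¹ has two distinct real eigenvalues.
-/

namespace Matrix

theorem trace_mul_inv_sq_sub_four_det_mul_inv {K : Type*} [Field K]
    (A B : Matrix (Fin 2) (Fin 2) K) (hA : A.det ≠ 0) :
    (B * A⁻¹).trace ^ 2 - 4 * (B * A⁻¹).det =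
      ((B * A.adjugate).trace ^ 2 - 4 * A.det * B.det) / A.det ^ 2 := by
  rw [inv_def, Ring.inverse_eq_inv', mul_smul_comm, trace_smul, det_smul, det_mul, det_adjugate,
    smul_eq_mul, Fintype.card_fin]
  field_simp
  ring

theorem det_smul_vecMulVec_add_smul_vecMulVec {R : Type*} [CommRing R]
    (α β : R) (u v : Fin 2 → R) :
    (α • vecMulVec u u + β • vecMulVec v v).det = α * β * (u 0 * v 1 - u 1 * v 0) ^ 2 := by
  simp only [det_fin_two, add_apply, smul_apply, vecMulVec_apply, smul_eq_mul]
  ring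

theorem trace_mul_adjugate_sq_sub_four_det_mul_det_of_vecMulVec {R : Type*} [CommRing R]
    (α β γ δ : R) (u v : Fin 2 → R) :
    ((γ • vecMulVec u u + δ • vecMulVec v v) *
        (α • vecMulVec u u + β • vecMulVec v v).adjugate).trace ^ 2 -
      4 * (α • vecMulVec u u + β • vecMulVec v v).det *
        (γ • vecMulVec u u + δ • vecMulVec v v).det =
      (α * δ - β * γ) ^ 2 * (u 0 * v 1 - u 1 * v 0) ^ 4 := by
  simp only [adjugate_fin_two, trace_fin_two, det_fin_two, mul_apply, Fin.sum_univ_two, of_apply,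
    cons_val', cons_val_zero, cons_val_one, cons_val_fin_one, add_apply, smul_apply,
    vecMulVec_apply, smul_eq_mul]
  ring

theorem trace_mul_inv_sq_sub_four_det_mul_inv_pos_of_cube_sum_slices (u v : Fin 2 → ℝ)
    (hA : (u 0 • vecMulVec u u + v 0 • vecMulVec v v).det ≠ 0) :
    0 < ((u 1 • vecMulVec u u + v 1 • vecMulVec v v) *
      (u 0 • vecMulVec u u + v 0 • vecMulVec v v)⁻¹).trace ^ 2 -
        4 * ((u 1 • vecMulVec u u + v 1 • vecMulVec v v) *
          (u 0 • vecMulVec u u + v 0 • vecMulVec v v)⁻¹).det := by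
  have hw : u 0 * v 1 - u 1 * v 0 ≠ 0 := by
    rw [det_smul_vecMulVec_add_smul_vecMulVec] at hA
    exact pow_ne_zero_iff two_ne_zero |>.mp (right_ne_zero_of_mul hA)
  rw [trace_mul_inv_sq_sub_four_det_mul_inv _ _ hA,
    trace_mul_adjugate_sq_sub_four_det_mul_det_of_vecMulVec,
    show u 0 * v 1 - v 0 * u 1 = u 0 * v 1 - u 1 * v 0 by ring]
  positivity

end Matrix

open Matrix

theorem no_symmetric_rank_two_of_defective_or_complex_eigenvalues
    (a b c d : ℝ)
    (hX : IsUnit (!![a, b; b, c] : Matrix (Fin 2) (Fin 2) ℝ).det)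
    (hM : (((!![b, c; c, d] : Matrix (Fin 2) (Fin 2) ℝ) *
          (!![a, b; b, c] : Matrix (Fin 2) (Fin 2) ℝ)⁻¹).trace ^ 2 -
            4 * ((!![b, c; c, d] : Matrix (Fin 2) (Fin 2) ℝ) *
              (!![a, b; b, c] : Matrix (Fin 2) (Fin 2) ℝ)⁻¹).det = 0 ∧
          (!![b, c; c, d] : Matrix (Fin 2) (Fin 2) ℝ) *
              (!![a, b; b, c] : Matrix (Fin 2) (Fin 2) ℝ)⁻¹ ≠
            (((!![b, c; c, d] : Matrix (Fin 2) (Fin 2) ℝ) *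
              (!![a, b; b, c] : Matrix (Fin 2) (Fin 2) ℝ)⁻¹).trace / 2) • 1) ∨
        ((!![b, c; c, d] : Matrix (Fin 2) (Fin 2) ℝ) *
          (!![a, b; b, c] : Matrix (Fin 2) (Fin 2) ℝ)⁻¹).trace ^ 2 -
            4 * ((!![b, c; c, d] : Matrix (Fin 2) (Fin 2) ℝ) *
              (!![a, b; b, c] : Matrix (Fin 2) (Fin 2) ℝ)⁻¹).det < 0) :
    ¬ ∃ u v : Fin 2 → ℝ, ∀ i j : Fin 2,
      (!![a, b; b, c] : Matrix (Fin 2) (Fin 2) ℝ) i j =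
          u i * u j * u 0 + v i * v j * v 0 ∧
      (!![b, c; c, d] : Matrix (Fin 2) (Fin 2) ℝ) i j =
          u i * u j * u 1 + v i * v j * v 1 := by
  rintro ⟨u, v, h⟩
  have hA : !![a, b; b, c] = u 0 • vecMulVec u u + v 0 • vecMulVec v v := by
    ext i j
    rw [(h i j).1]
    simp only [Matrix.add_apply, Matrix.smul_apply, vecMulVec_apply, smul_eq_mul]
    ring
  have hB : !![b, c; c, d] = u 1 • vecMulVec u u + v 1 • vecMulVec v v := by
    ext i j
    rw [(h i j).2]
    simp only [Matrix.add_apply, Matrix.smul_apply, vecMulVec_apply, smul_eq_mul]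
    ring
  rw [hA, hB] at hM
  rw [hA] at hX
  have hdisc := trace_mul_inv_sq_sub_four_det_mul_inv_pos_of_cube_sum_slices u v hX.ne_zero
  rcases hM with ⟨hzero, -⟩ | hneg <;> linarith
end

section
/- Every real symmetric 2×2×2 tensor has symmetric rank at most 3, i.e., can be written as a sum of at most 3 terms of the form u⊗u⊗u with u ∈ ℝ². -/
/-!
Record a symmetric tensor by its entries `a = X 0 0 0`, `b = X 0 0 1`, `c = X 0 1 1`, `d = X 1 1 1`.
Since every real number is a cube, `(α, α r)^{⊗3}` contributes `A (1, r, r², r³)` with `A = α³`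
arbitrary, and `(0, t)^{⊗3}` contributes an arbitrary amount to `d` alone. So it suffices to find
signed weights `A, C` at nodes `r, s` with moments `A + C = a`, `A r + C s = b`, `A r² + C s² = c`.
This two-point moment problem is solvable unless `a = b = 0 ≠ c`, and exchanging the two
coordinates turns that case into a solvable one.
-/

open Function

theorem Real.pow_surjective_of_odd {n : ℕ} (hn : Odd n) : Surjective fun x : ℝ => x ^ n := by
  intro t
  rcases le_total 0 t with ht | ht
  · exact ⟨t ^ (n⁻¹ : ℝ), Real.rpow_inv_natCast_pow ht hn.pos.ne'⟩
  · refine ⟨-(-t) ^ (n⁻¹ : ℝ), ?_⟩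
    simp only [hn.neg_pow, Real.rpow_inv_natCast_pow (neg_nonneg.2 ht) hn.pos.ne', neg_neg]

/- Writing `s = r + x`, the equations become `C x = b - a r` and `C x² = a r² - 2 b r + c`. -/
theorem exists_two_atom_moments_of_ne_zero {a b c r : ℝ} (hE : b - a * r ≠ 0)
    (hD : a * r ^ 2 - 2 * b * r + c ≠ 0) :
    ∃ A C s : ℝ, A + C = a ∧ A * r + C * s = b ∧ A * r ^ 2 + C * s ^ 2 = c := by
  set E := b - a * r with hE_def
  set D := a * r ^ 2 - 2 * b * r + c with hD_def
  have h₁ : E ^ 2 / D * (D / E) = E := by field_simp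
  have h₂ : E ^ 2 / D * (D / E) ^ 2 = D := by field_simp
  exact ⟨a - E ^ 2 / D, E ^ 2 / D, r + D / E, by ring, by linear_combination h₁ - hE_def,
    by linear_combination 2 * r * h₁ + h₂ - 2 * r * hE_def - hD_def⟩

theorem exists_two_atom_moments {a b c : ℝ} (h : a ≠ 0 ∨ b ≠ 0 ∨ c = 0) :
    ∃ A C r s : ℝ, A + C = a ∧ A * r + C * s = b ∧ A * r ^ 2 + C * s ^ 2 = c := by
  by_cases hab : a = 0 ∧ b = 0
  · obtain ⟨rfl, rfl⟩ := hab
    obtain rfl : c = 0 := by simpa using h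
    exact ⟨0, 0, 0, 0, by simp⟩
  suffices ∃ r, b - a * r ≠ 0 ∧ a * r ^ 2 - 2 * b * r + c ≠ 0 by
    obtain ⟨r, hE, hD⟩ := this
    obtain ⟨A, C, s, h⟩ := exists_two_atom_moments_of_ne_zero hE hD
    exact ⟨A, C, r, s, h⟩
  by_contra! hr
  rcases eq_or_ne a 0 with rfl | ha
  · have hb : b ≠ 0 := by simpa using hab
    have h₀ := hr 0 (by simpa using hb)
    have h₁ := hr 1 (by simpa using hb)
    exact hb (by linarith)
  · have vertex (r : ℝ) :
        a * (a * r ^ 2 - 2 * b * r + c) = (b - a * r) ^ 2 + (a * c - b ^ 2) := by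
      ring
    have sq_eq (t : ℝ) (ht : t ≠ 0) : t ^ 2 = b ^ 2 - a * c := by
      have hr_t : b - a * ((b - t) / a) = t := by field_simp; ring
      have := vertex ((b - t) / a)
      rw [hr _ (by rwa [hr_t]), hr_t] at this
      linarith
    linarith [sq_eq 1 one_ne_zero, sq_eq 2 two_ne_zero]

def cube {ι R : Type*} [Mul R] (u : ι → R) : ι → ι → ι → R := fun i j k => u i * u j * u k

def IsSymmTensor {ι α : Type*} (X : ι → ι → ι → α) : Prop :=
  ∀ i j k, X i j k = X j i k ∧ X i j k = X i k j

theorem isSymmTensor_cube {ι R : Type*} [CommSemigroup R] (u : ι → R) :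
    IsSymmTensor (cube u) :=
  fun i j k => ⟨congrArg (· * u k) (mul_comm (u i) (u j)), mul_right_comm (u i) (u j) (u k)⟩

namespace IsSymmTensor

variable {ι α : Type*}

theorem add [Add α] {X Y : ι → ι → ι → α} (hX : IsSymmTensor X) (hY : IsSymmTensor Y) :
    IsSymmTensor (X + Y) :=
  fun i j k => ⟨by simp only [Pi.add_apply, (hX i j k).1, (hY i j k).1],
    by simp only [Pi.add_apply, (hX i j k).2, (hY i j k).2]⟩

theorem comp_rev {X : Fin 2 → Fin 2 → Fin 2 → α} (hX : IsSymmTensor X) :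
    IsSymmTensor fun i j k : Fin 2 => X i.rev j.rev k.rev :=
  fun i j k => hX i.rev j.rev k.rev

theorem ext_fin_two {X Y : Fin 2 → Fin 2 → Fin 2 → α} (hX : IsSymmTensor X) (hY : IsSymmTensor Y)
    (h₀ : X 0 0 0 = Y 0 0 0) (h₁ : X 0 0 1 = Y 0 0 1) (h₂ : X 0 1 1 = Y 0 1 1)
    (h₃ : X 1 1 1 = Y 1 1 1) : X = Y := by
  have reduce : ∀ Z : Fin 2 → Fin 2 → Fin 2 → α, IsSymmTensor Z →
      Z 0 1 0 = Z 0 0 1 ∧ Z 1 0 0 = Z 0 0 1 ∧ Z 1 0 1 = Z 0 1 1 ∧ Z 1 1 0 = Z 0 1 1 :=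
    fun Z hZ => ⟨(hZ 0 0 1).2.symm, (hZ 1 0 0).1.trans (hZ 0 0 1).2.symm, (hZ 1 0 1).1,
      (hZ 1 1 0).2.trans (hZ 1 0 1).1⟩
  obtain ⟨x₁, x₂, x₃, x₄⟩ := reduce X hX
  obtain ⟨y₁, y₂, y₃, y₄⟩ := reduce Y hY
  funext i j k
  fin_cases i <;> fin_cases j <;> fin_cases k <;> simp_all

theorem exists_eq_cube_add_cube_add_cube {X : Fin 2 → Fin 2 → Fin 2 → ℝ} (hX : IsSymmTensor X)
    (h : X 0 0 0 ≠ 0 ∨ X 0 0 1 ≠ 0 ∨ X 0 1 1 = 0) :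
    ∃ u v w : Fin 2 → ℝ, X = cube u + cube v + cube w := by
  obtain ⟨A, C, r, s, h₀, h₁, h₂⟩ := exists_two_atom_moments h
  have cbrt := Real.pow_surjective_of_odd (n := 3) (by decide)
  obtain ⟨α, rfl⟩ := cbrt A
  obtain ⟨γ, rfl⟩ := cbrt C
  obtain ⟨t, ht⟩ := cbrt (X 1 1 1 - α ^ 3 * r ^ 3 - γ ^ 3 * s ^ 3)
  refine ⟨![α, α * r], ![γ, γ * s], ![0, t], hX.ext_fin_two
    (((isSymmTensor_cube _).add (isSymmTensor_cube _)).add (isSymmTensor_cube _)) ?_ ?_ ?_ ?_⟩ <;>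
    simp only [Pi.add_apply, cube, Matrix.cons_val_zero, Matrix.cons_val_one,
      Matrix.cons_val_fin_one]
  · linear_combination -h₀
  · linear_combination -h₁
  · linear_combination -h₂
  · linear_combination -ht

end IsSymmTensor

theorem symmetric_rank_at_most_three
    (X : Fin 2 → Fin 2 → Fin 2 → ℝ)
    (hsym : ∀ i j k, X i j k = X j i k ∧ X i j k = X i k j) :
    ∃ u v w : Fin 2 → ℝ, ∀ i j k,
      X i j k = u i * u j * u k + v i * v j * v k + w i * w j * w k := by
  suffices ∃ u v w : Fin 2 → ℝ, X = cube u + cube v + cube w by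
    obtain ⟨u, v, w, rfl⟩ := this
    exact ⟨u, v, w, fun _ _ _ => rfl⟩
  have hX : IsSymmTensor X := hsym
  by_cases h : X 0 0 0 ≠ 0 ∨ X 0 0 1 ≠ 0 ∨ X 0 1 1 = 0
  · exact hX.exists_eq_cube_add_cube_add_cube h
  · have h₀₀₁ : X 0 0 1 = 0 := by_contra fun h' => h (.inr (.inl h'))
    have h₁₀₀ : X 1 0 0 = 0 := by rw [(hX 1 0 0).1, ← (hX 0 0 1).2, h₀₀₁]
    obtain ⟨u, v, w, hrev⟩ :=
      hX.comp_rev.exists_eq_cube_add_cube_add_cube (.inr (.inr h₁₀₀))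
    refine ⟨u ∘ Fin.rev, v ∘ Fin.rev, w ∘ Fin.rev, ?_⟩
    ext i j k
    simpa [cube] using congr_fun₃ hrev i.rev j.rev k.rev
end

section
/- Let X : Fin 2 → Fin 2 → Fin 2 → ℝ be the tensor with X₁₁₁ = 1, X₂₂₁ = 1, X₂₁₂ = 1, X₁₂₂ = −1, and all other entries 0. Then for every rank-1 tensor Y of the form Yᵢⱼₖ = xᵢyⱼzₖ satisfying the stationarity condition x = (Σⱼₖ X_{·jk} yⱼ zₖ)/(‖y‖²‖z‖²) with y, z nonzero, the squared Frobenius distance ‖X − Y‖² equals 3. -/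
theorem stationary_rank_one_distance_constant
    (y z : Fin 2 → ℝ) (hy : y ≠ 0) (hz : z ≠ 0)
    (X : Fin 2 → Fin 2 → Fin 2 → ℝ)
    (hX : X = fun i j k =>
      if k = 0 then (!![1, 0; 0, 1] : Matrix (Fin 2) (Fin 2) ℝ) i j
      else (!![0, -1; 1, 0] : Matrix (Fin 2) (Fin 2) ℝ) i j)
    (x : Fin 2 → ℝ)
    (hx : ∀ i, x i = (∑ j, ∑ k, X i j k * y j * z k) /
        ((∑ j, (y j) ^ 2) * (∑ k, (z k) ^ 2))) :
    ∑ i, ∑ j, ∑ k, (X i j k - x i * y j * z k) ^ 2 = 3 := by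
  have hy' : y 0 ^ 2 + y 1 ^ 2 ≠ 0 := by
    intro h
    apply hy
    funext i
    have h0 : y 0 = 0 ∧ y 1 = 0 := by constructor <;> nlinarith [sq_nonneg (y 0), sq_nonneg (y 1)]
    fin_cases i <;> simp [h0.1, h0.2]
  have hz' : z 0 ^ 2 + z 1 ^ 2 ≠ 0 := by
    intro h
    apply hz
    funext i
    have h0 : z 0 = 0 ∧ z 1 = 0 := by constructor <;> nlinarith [sq_nonneg (z 0), sq_nonneg (z 1)]
    fin_cases i <;> simp [h0.1, h0.2]
  have h0 := hx 0
  have h1 := hx 1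
  subst hX
  simp only [Fin.sum_univ_two, Matrix.cons_val_zero, Matrix.cons_val_one, Matrix.head_cons,
    Fin.isValue] at h0 h1 ⊢
  norm_num at h0 h1 ⊢
  rw [h0, h1]
  field_simp
  ring
end

section
/- For real numbers a, e, d, h with a² + e² < d² + h², consider the 2×2×2 tensor X with X₁₁₁ = a, X₂₂₁ = d, X₁₁₂ = e, X₂₂₂ = h, and all other entries zero. Then the tensor Y with Y₂₂₁ = d, Y₂₂₂ = h and all other entries zero is the unique rank-1 tensor (of the form x⊗y⊗z) minimizing ‖X − Y‖², with minimum value a² + e². -/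
theorem lem1 (a e d h u v s t : ℝ) (hst : u*v = s*t) (hlt : a^2+e^2 < d^2+h^2) :
    (a*u+d*v)^2 + (e*u+h*v)^2 ≤ (d^2+h^2)*(u^2+v^2+s^2+t^2) := by
  have hK : 0 < d^2+h^2 := by nlinarith [sq_nonneg a, sq_nonneg e]
  have hc2 : (a*d+e*h)^2 ≤ (d^2+h^2)^2 := by nlinarith [sq_nonneg (a*h-e*d)]
  have h2 : 0 ≤ (d^2+h^2)*((d^2+h^2)*(s^2+t^2) - 2*(a*d+e*h)*(s*t)) := by
    nlinarith [sq_nonneg ((d^2+h^2)*s - (a*d+e*h)*t),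
      mul_nonneg (sub_nonneg.2 hc2) (sq_nonneg t)]
  have h3 : 0 ≤ (d^2+h^2)*(s^2+t^2) - 2*(a*d+e*h)*(s*t) := by
    by_contra hcon
    push_neg at hcon
    nlinarith [mul_pos hK (neg_pos.2 hcon)]
  have key : (d^2+h^2)*(u^2+v^2+s^2+t^2) - ((a*u+d*v)^2+(e*u+h*v)^2)
      = (d^2+h^2 - (a^2+e^2))*u^2 + ((d^2+h^2)*(s^2+t^2) - 2*(a*d+e*h)*(s*t)) := by
    linear_combination (-2*(a*d+e*h))*hst
  nlinarith [mul_nonneg (sub_nonneg.2 hlt.le) (sq_nonneg u)]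

theorem lem2 (K N w0 w1 r0 r1 : ℝ) (hK : 0 ≤ K) (hN : 0 ≤ N)
    (h1 : w0^2 + w1^2 ≤ K*N) :
    2*(w0*r0 + w1*r1) ≤ K + N*(r0^2+r1^2) := by
  nlinarith [sq_nonneg (w0*r1 - w1*r0), sq_nonneg (K - N*(r0^2+r1^2)),
    mul_nonneg hN (add_nonneg (sq_nonneg r0) (sq_nonneg r1)),
    mul_le_mul_of_nonneg_right h1 (add_nonneg (sq_nonneg r0) (sq_nonneg r1)),
    sq_nonneg (w0*r0 + w1*r1), sq_nonneg (K + N*(r0^2+r1^2) - 2*(w0*r0+w1*r1))]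

theorem key_ineq (a e d h u v s t r0 r1 : ℝ) (hst : u*v = s*t)
    (hlt : a^2+e^2 < d^2+h^2) :
    a^2+e^2 ≤ (a - u*r0)^2 + (e - u*r1)^2 + (s*r0)^2 + (s*r1)^2
      + (t*r0)^2 + (t*r1)^2 + (d - v*r0)^2 + (h - v*r1)^2 := by
  have hK : 0 < d^2+h^2 := by nlinarith [sq_nonneg a, sq_nonneg e]
  have hN : (0:ℝ) ≤ u^2+v^2+s^2+t^2 := by positivity
  have h1 := lem1 a e d h u v s t hst hlt
  have h2 := lem2 (d^2+h^2) (u^2+v^2+s^2+t^2) (a*u+d*v) (e*u+h*v) r0 r1 hK.le hN h1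
  nlinarith [h2]

theorem quad (K N R P W : ℝ) (hK : 0 < K) (hN : 0 ≤ N) (hR : 0 ≤ R)
    (h1 : W ≤ K*N) (hCS : P^2 ≤ W*R) (heq2 : 2*P = K + N*R) :
    W = K*N ∧ 0 < R := by
  have hsq : (K+N*R)^2 = 4*P^2 := by rw [← heq2]; ring
  have h1R : W*R ≤ K*N*R := mul_le_mul_of_nonneg_right h1 hR
  have hKNR2 : (K - N*R)^2 ≤ 0 := by nlinarith
  have hKNR : K = N*R := by nlinarith [sq_nonneg (K-N*R)]
  have hRpos : 0 < R := by
    rcases hR.lt_or_eq with hh | hh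
    · exact hh
    · exfalso; rw [← hh, mul_zero] at hKNR; linarith
  have hge : K*N*R ≤ W*R := by nlinarith
  have hWR : W*R = (K*N)*R := by linarith
  exact ⟨mul_right_cancel₀ hRpos.ne' hWR, hRpos⟩

theorem lem_part2 (a e d h s t : ℝ) (hlt : a^2+e^2 < d^2+h^2) :
    0 ≤ (d^2+h^2)*(s^2+t^2) - 2*(a*d+e*h)*(s*t) := by
  have hK : 0 < d^2+h^2 := by nlinarith [sq_nonneg a, sq_nonneg e]
  have hc2 : (a*d+e*h)^2 ≤ (d^2+h^2)^2 := by nlinarith [sq_nonneg (a*h-e*d)]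
  have h2 : 0 ≤ (d^2+h^2)*((d^2+h^2)*(s^2+t^2) - 2*(a*d+e*h)*(s*t)) := by
    nlinarith [sq_nonneg ((d^2+h^2)*s - (a*d+e*h)*t),
      mul_nonneg (sub_nonneg.2 hc2) (sq_nonneg t)]
  by_contra hcon
  push_neg at hcon
  nlinarith [mul_pos hK (neg_pos.2 hcon)]

theorem lem_u (a e d h u s t : ℝ) (hlt : a^2+e^2 < d^2+h^2)
    (hzero : ((d^2+h^2) - (a^2+e^2))*u^2
      + ((d^2+h^2)*(s^2+t^2) - 2*(a*d+e*h)*(s*t)) = 0)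
    (hpart2 : 0 ≤ (d^2+h^2)*(s^2+t^2) - 2*(a*d+e*h)*(s*t)) : u = 0 := by
  have hu2 : u^2 ≤ 0 := by nlinarith [mul_nonneg (sub_nonneg.2 hlt.le) (sq_nonneg u)]
  nlinarith [sq_nonneg u]

theorem lem_st0 (a e d h s t : ℝ) (hlt : a^2+e^2 < d^2+h^2)
    (hpart2eq : (d^2+h^2)*(s^2+t^2) = 2*(a*d+e*h)*(s*t)) : s = 0 ∧ t = 0 := by
  have hK : 0 < d^2+h^2 := by nlinarith [sq_nonneg a, sq_nonneg e]
  have hc : (a*d+e*h)^2 ≤ (a^2+e^2)*(d^2+h^2) := by nlinarith [sq_nonneg (a*h-e*d)]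
  have hst2 : s^2 + t^2 ≤ 0 := by
    by_contra hcon
    push_neg at hcon
    have hsq2 : ((d^2+h^2)*(s^2+t^2))^2 = (2*(a*d+e*h)*(s*t))^2 := by rw [hpart2eq]
    nlinarith [hsq2, mul_nonneg (sub_nonneg.2 hc) (sq_nonneg (s*t)),
      mul_nonneg (mul_nonneg (add_nonneg (sq_nonneg a) (sq_nonneg e)) hK.le) (sq_nonneg (s^2-t^2)),
      mul_pos (mul_pos hK (sub_pos.2 hlt)) (mul_pos hcon hcon)]
  constructor <;> nlinarith [sq_nonneg s, sq_nonneg t]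

theorem lem_fin (d h v r0 r1 : ℝ)
    (h0 : (d - v*r0)^2 + (h - v*r1)^2 = 0) : v*r0 = d ∧ v*r1 = h := by
  constructor <;> nlinarith [sq_nonneg (d - v*r0), sq_nonneg (h - v*r1)]

set_option maxHeartbeats 1600000 in
theorem key_eq (a e d h u v s t r0 r1 : ℝ) (hst : u*v = s*t)
    (hlt : a^2+e^2 < d^2+h^2)
    (heq : (a - u*r0)^2 + (e - u*r1)^2 + (s*r0)^2 + (s*r1)^2
      + (t*r0)^2 + (t*r1)^2 + (d - v*r0)^2 + (h - v*r1)^2 = a^2+e^2) :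
    u = 0 ∧ s = 0 ∧ t = 0 ∧ v*r0 = d ∧ v*r1 = h := by
  have hK : 0 < d^2+h^2 := by nlinarith [sq_nonneg a, sq_nonneg e]
  have hN : (0:ℝ) ≤ u^2+v^2+s^2+t^2 := by positivity
  have hR0 : (0:ℝ) ≤ r0^2+r1^2 := by positivity
  have h1 := lem1 a e d h u v s t hst hlt
  have heq2 : 2*((a*u+d*v)*r0 + (e*u+h*v)*r1)
      = (d^2+h^2) + (u^2+v^2+s^2+t^2)*(r0^2+r1^2) := by linear_combination -heq
  have hCS : ((a*u+d*v)*r0 + (e*u+h*v)*r1)^2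
      ≤ ((a*u+d*v)^2+(e*u+h*v)^2)*(r0^2+r1^2) := by
    nlinarith [sq_nonneg ((a*u+d*v)*r1 - (e*u+h*v)*r0)]
  obtain ⟨hw, hRpos⟩ := quad (d^2+h^2) (u^2+v^2+s^2+t^2) (r0^2+r1^2)
    ((a*u+d*v)*r0 + (e*u+h*v)*r1) ((a*u+d*v)^2+(e*u+h*v)^2) hK hN hR0 h1 hCS heq2
  have hzero : ((d^2+h^2) - (a^2+e^2))*u^2
      + ((d^2+h^2)*(s^2+t^2) - 2*(a*d+e*h)*(s*t)) = 0 := by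
    linear_combination -hw + (2*(a*d+e*h))*hst
  have hpart2 := lem_part2 a e d h s t hlt
  have hu := lem_u a e d h u s t hlt hzero hpart2
  have hpart2eq : (d^2+h^2)*(s^2+t^2) = 2*(a*d+e*h)*(s*t) := by
    rw [hu] at hzero; linarith
  obtain ⟨hs, ht⟩ := lem_st0 a e d h s t hlt hpart2eq
  have h0 : (d - v*r0)^2 + (h - v*r1)^2 = 0 := by
    rw [hu, hs, ht] at heq; nlinarith [heq]
  obtain ⟨h5, h6⟩ := lem_fin d h v r0 r1 h0
  exact ⟨hu, hs, ht, h5, h6⟩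

theorem diagonal_slab_best_rank_one
    (a e d h : ℝ) (hlt : a ^ 2 + e ^ 2 < d ^ 2 + h ^ 2)
    (X Y : Fin 2 → Fin 2 → Fin 2 → ℝ)
    (hX : X = fun i j k =>
      if k = 0 then (!![a, 0; 0, d] : Matrix (Fin 2) (Fin 2) ℝ) i j
      else (!![e, 0; 0, h] : Matrix (Fin 2) (Fin 2) ℝ) i j)
    (hY : Y = fun i j k =>
      if k = 0 then (!![0, 0; 0, d] : Matrix (Fin 2) (Fin 2) ℝ) i j
      else (!![0, 0; 0, h] : Matrix (Fin 2) (Fin 2) ℝ) i j) :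
    (∃ x y z : Fin 2 → ℝ, ∀ i j k, Y i j k = x i * y j * z k) ∧
      (∑ i, ∑ j, ∑ k, (X i j k - Y i j k) ^ 2 = a ^ 2 + e ^ 2) ∧
      (∀ x y z : Fin 2 → ℝ,
        a ^ 2 + e ^ 2 ≤ ∑ i, ∑ j, ∑ k, (X i j k - x i * y j * z k) ^ 2 ∧
        ((∑ i, ∑ j, ∑ k, (X i j k - x i * y j * z k) ^ 2 = a ^ 2 + e ^ 2) →
          ∀ i j k, x i * y j * z k = Y i j k)) := by
  have hlt' : a^2 + e^2 < d^2 + h^2 := hlt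
  refine ⟨⟨![0,1], ![0,1], ![d,h], ?_⟩, ?_, ?_⟩
  · intro i j k
    subst hY
    fin_cases i <;> fin_cases j <;> fin_cases k <;> simp
  · subst hX hY
    simp [Fin.sum_univ_two]
  · intro x y z
    have hst : (x 0 * y 0)*(x 1 * y 1) = (x 0 * y 1)*(x 1 * y 0) := by ring
    have hsum : ∑ i, ∑ j, ∑ k, (X i j k - x i * y j * z k) ^ 2
        = (a - (x 0 * y 0)*(z 0))^2 + (e - (x 0 * y 0)*(z 1))^2
        + ((x 0 * y 1)*(z 0))^2 + ((x 0 * y 1)*(z 1))^2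
        + ((x 1 * y 0)*(z 0))^2 + ((x 1 * y 0)*(z 1))^2
        + (d - (x 1 * y 1)*(z 0))^2 + (h - (x 1 * y 1)*(z 1))^2 := by
      subst hX
      simp [Fin.sum_univ_two]
      ring
    constructor
    · rw [hsum]
      exact key_ineq a e d h (x 0 * y 0) (x 1 * y 1) (x 0 * y 1) (x 1 * y 0)
        (z 0) (z 1) hst hlt'
    · intro hE i j k
      rw [hsum] at hE
      obtain ⟨hu, hs, ht, h5, h6⟩ := key_eq a e d h (x 0 * y 0) (x 1 * y 1)
        (x 0 * y 1) (x 1 * y 0) (z 0) (z 1) hst hlt' hE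
      subst hY
      fin_cases i <;> fin_cases j <;> fin_cases k <;> simp <;>
        first
          | exact h5
          | exact h6
          | exact Or.inl (mul_eq_zero.1 hu)
          | exact Or.inl (mul_eq_zero.1 hs)
          | exact Or.inl (mul_eq_zero.1 ht)
end

section
/- Let X be the symmetric 2×2×2 tensor with entries a = 0, b = 1, c = 1, d = 0 (i.e., X₁₁₁ = 0, X₂₂₂ = 0, and all mixed entries equal 1). Then the vector y ∈ ℝ² with y₁ = y₂ = (3/4)^{1/3} is a global minimizer of ‖X − y⊗y⊗y‖² over y ∈ ℝ², with minimum value 3/2. -/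
/-!
For the tensor `X` with zero diagonal and all mixed entries `1`, the residual of a rank-one
approximation `w ⊗ w ⊗ w` with `w = (a, b)` collapses to `(a² + b²)³ - 6m + 6`, where
`m = ab(a + b)`. Since `2m² ≤ (a² + b²)³` and `6m ≤ 2m² + 9/2`, the residual is at least
`6 - 9/2 = 3/2`, with equality exactly when `a = b` and `m = 3/2`, i.e. `a³ = 3/4`.
-/

lemma two_mul_sq_mul_mul_add_le {R : Type*} [CommRing R] [LinearOrder R] [IsStrictOrderedRing R]
    (a b : R) : 2 * (a * b * (a + b)) ^ 2 ≤ (a ^ 2 + b ^ 2) ^ 3 := by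
  have key : (a ^ 2 + b ^ 2) ^ 3 - 2 * (a * b * (a + b)) ^ 2
      = (a - b) ^ 2 * ((a ^ 2 + b ^ 2 + a * b) ^ 2 + (a * b) ^ 2) := by ring
  have : 0 ≤ (a ^ 2 + b ^ 2) ^ 3 - 2 * (a * b * (a + b)) ^ 2 := by rw [key]; positivity
  linarith

lemma sum_sq_sub_cube_eq (w : Fin 2 → ℝ) :
    ∑ i, ∑ j, ∑ k, ((if i = j ∧ j = k then 0 else 1) - w i * w j * w k) ^ 2
      = (w 0 ^ 2 + w 1 ^ 2) ^ 3 - 6 * (w 0 * w 1 * (w 0 + w 1)) + 6 := by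
  simp only [Fin.sum_univ_two, Fin.isValue, Fin.reduceEq, and_self, and_false, false_and,
    ite_true, ite_false]
  ring

lemma rpow_one_div_three_pow_three {x : ℝ} (hx : 0 ≤ x) : (x ^ ((1 : ℝ) / 3)) ^ 3 = x := by
  rw [one_div, ← Nat.cast_ofNat, Real.rpow_inv_natCast_pow hx three_ne_zero]

theorem best_symmetric_rank_one_example
    (X : Fin 2 → Fin 2 → Fin 2 → ℝ)
    (hX : X = fun i j k => if i = j ∧ j = k then 0 else 1)
    (y : Fin 2 → ℝ) (hy : y = fun _ => ((3 : ℝ) / 4) ^ ((1 : ℝ) / 3)) :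
    (∑ i, ∑ j, ∑ k, (X i j k - y i * y j * y k) ^ 2 = 3 / 2) ∧
      ∀ w : Fin 2 → ℝ,
        3 / 2 ≤ ∑ i, ∑ j, ∑ k, (X i j k - w i * w j * w k) ^ 2 := by
  subst hX hy
  refine ⟨?_, fun w => ?_⟩
  · set t := ((3 : ℝ) / 4) ^ ((1 : ℝ) / 3)
    have ht : t ^ 3 = 3 / 4 := rpow_one_div_three_pow_three (by norm_num)
    rw [sum_sq_sub_cube_eq]
    linear_combination (8 * t ^ 3 - 6) * ht
  · set m := w 0 * w 1 * (w 0 + w 1)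
    have hm : 2 * m ^ 2 ≤ (w 0 ^ 2 + w 1 ^ 2) ^ 3 := two_mul_sq_mul_mul_add_le (w 0) (w 1)
    rw [sum_sq_sub_cube_eq]
    nlinarith [sq_nonneg (m - 3 / 2)]
end

section
/- Let X be the symmetric tensor with X₁₁₁ = 3, X₂₂₂ = 3, and all other entries 1, and let Y be the tensor with all entries 3/2. Set Z = X − Y, with slabs Z₁ = (1/2)[[3,−1],[−1,−1]] and Z₂ = (1/2)[[−1,−1],[−1,3]]. Then Z₂·Z₁⁻¹ = [[0,1],[−1,−2]], which has −1 as a repeated eigenvalue with a one-dimensional eigenspace. -/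
theorem residual_defective_eigenvalue_example :
    ((1 / 2 : ℝ) • (!![-1, -1; -1, 3] : Matrix (Fin 2) (Fin 2) ℝ)) *
        ((1 / 2 : ℝ) • (!![3, -1; -1, -1] : Matrix (Fin 2) (Fin 2) ℝ))⁻¹ =
      !![0, 1; -1, -2] ∧
    ((!![0, 1; -1, -2] : Matrix (Fin 2) (Fin 2) ℝ) + 1) ^ 2 = 0 ∧
    (!![0, 1; -1, -2] : Matrix (Fin 2) (Fin 2) ℝ) + 1 ≠ 0 := by
  refine ⟨?_, ?_, ?_⟩
  · have hinv : ((1 / 2 : ℝ) • (!![3, -1; -1, -1] : Matrix (Fin 2) (Fin 2) ℝ))⁻¹ =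
        !![1/2, -1/2; -1/2, -3/2] := by
      apply Matrix.inv_eq_right_inv
      ext i j
      fin_cases i <;> fin_cases j <;>
        simp [Matrix.mul_apply, Fin.sum_univ_two] <;> norm_num
    rw [hinv]
    ext i j
    fin_cases i <;> fin_cases j <;>
      simp [Matrix.mul_apply, Fin.sum_univ_two] <;> norm_num
  · ext i j
    fin_cases i <;> fin_cases j <;>
      simp [pow_two, Matrix.mul_apply, Fin.sum_univ_two, Matrix.one_apply] <;> norm_num
  · intro h
    have := congrFun (congrFun h 0) 1
    simp [Matrix.one_apply] at this
end

section
/- Let a, b, c, d ∈ ℝ, and suppose y₁ = z·y₂ with y₂ ≠ 0 and y₂³ = (a·z² + 2b·z + c)/(z⁵ + 2z³ + z), where z is a real root of −b·z³ + (a−2c)·z² + (2b−d)·z + c = 0 and z⁵ + 2z³ + z ≠ 0. Then the symmetric tensor Z = X − y⊗y⊗y, where X is the symmetric tensor given by (a,b,c,d), satisfies Δ(Z) = (b'c' − a'd')² − 4(b'd' − c'²)(a'c' − b'²) = 0, where (a',b',c',d') = (a − z³y₂³, b − z²y₂³, c − z·y₂³, d − y₂³). -/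
theorem residual_hyperdeterminant_zero_symmetric
    (a b c d z y₂ : ℝ) (hy2 : y₂ ≠ 0)
    (hz : -b * z ^ 3 + (a - 2 * c) * z ^ 2 + (2 * b - d) * z + c = 0)
    (hden : z ^ 5 + 2 * z ^ 3 + z ≠ 0)
    (hy : y₂ ^ 3 = (a * z ^ 2 + 2 * b * z + c) / (z ^ 5 + 2 * z ^ 3 + z)) :
    ((b - z ^ 2 * y₂ ^ 3) * (c - z * y₂ ^ 3) -
        (a - z ^ 3 * y₂ ^ 3) * (d - y₂ ^ 3)) ^ 2 -
      4 * ((b - z ^ 2 * y₂ ^ 3) * (d - y₂ ^ 3) - (c - z * y₂ ^ 3) ^ 2) *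
        ((a - z ^ 3 * y₂ ^ 3) * (c - z * y₂ ^ 3) - (b - z ^ 2 * y₂ ^ 3) ^ 2) = 0 := by
  have hzne : z ≠ 0 := by
    rintro rfl
    simp at hden
  have hw : y₂ ^ 3 * (z ^ 5 + 2 * z ^ 3 + z) = a * z ^ 2 + 2 * b * z + c := by
    rw [hy, div_mul_cancel₀ _ hden]
  set w := y₂ ^ 3 with hwdef
  -- c' = -(a' z^2 + 2 b' z)
  have hc : c - z * w =
      -((a - z ^ 3 * w) * z ^ 2 + 2 * (b - z ^ 2 * w) * z) := by
    linear_combination -hw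
  -- d' = 2 a' z^3 + 3 b' z^2  (after cancelling one z)
  have hdz : (d - w) * z =
      (2 * (a - z ^ 3 * w) * z ^ 3 + 3 * (b - z ^ 2 * w) * z ^ 2) * z := by
    linear_combination -hz + (2 * z ^ 2 - 1) * hw
  have hd : d - w = 2 * (a - z ^ 3 * w) * z ^ 3 + 3 * (b - z ^ 2 * w) * z ^ 2 :=
    mul_right_cancel₀ hzne hdz
  rw [hc, hd]
  ring
end
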